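/- For every n ≥ 0, n! = ∑_{λ ⊢ n} F_λ², where F_λ is the number of standard Young tableaux of shape λ. -/

import Mathlib

open scoped BigOperators

noncomputable section

namespace WAPpr

/-- A partition, represented as a finitely supported function `ℕ →₀ ℕ`
(0-indexed: `lam i` is the `(i+1)`-st part). -/
abbrev Ptn := ℕ →₀ ℕ

/-- `f` is a genuine partition: the parts are weakly decreasing. -/
def IsPtn (f : Ptn) : Prop := ∀ ⦃i j : ℕ⦄, i ≤ j → f j ≤ f i

/-- The size `|λ|` of a partition. -/
def psize (f : Ptn) : ℕ := f.sum fun _ m => m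

/-- The length (number of nonzero parts) of a partition. -/
def plen (f : Ptn) : ℕ := f.support.card

/-- `λ` covers `μ` in Young's lattice. -/
def Covers (lam mu : Ptn) : Prop :=
  IsPtn lam ∧ IsPtn mu ∧ (∀ i, mu i ≤ lam i) ∧ psize mu + 1 = psize lam

/-- The number of standard Young tableaux of shape `λ`, i.e. of saturated
chains from `∅` to `λ` in Young's lattice. -/
def F (lam : Ptn) : ℕ :=
  Nat.card {T : Fin (psize lam + 1) → Ptn //
    T 0 = 0 ∧ T (Fin.last (psize lam)) = lam ∧
    ∀ i : Fin (psize lam), Covers (T i.succ) (T i.castSucc)}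

/-- `conjF lam j` is the number of parts of `lam` that are `> j`,
i.e. the `(j+1)`-st part of the conjugate partition. -/
def conjF (lam : Ptn) (j : ℕ) : ℕ := (lam.support.filter fun i => j < lam i).card

/-- The cells of the Young diagram of `λ` (0-indexed). -/
def cells (lam : Ptn) : Finset (ℕ × ℕ) :=
  lam.support.biUnion fun i => ({i} : Finset ℕ) ×ˢ Finset.range (lam i)

/-- The hook length of the (0-indexed) cell `(i,j)` of `λ`. -/
def hook (lam : Ptn) (i j : ℕ) : ℕ := lam i + conjF lam j - i - j - 1

/-- The hook length product `H(λ)`. -/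
def hookProd (lam : Ptn) : ℕ := ∏ c ∈ cells lam, hook lam c.1 c.2

/-- The degree vector `n_λ = (λ_r, λ_{r-1}+1, …, λ_1+r-1)` (0-indexed). -/
def degv (lam : Ptn) (i : ℕ) : ℕ := lam (plen lam - 1 - i) + i

/-- The Vandermonde factor `Δ(n_λ) = ∏_{i<j} (n_j - n_i)`. -/
def vand (lam : Ptn) : ℝ :=
  ∏ p ∈ (Finset.range (plen lam) ×ˢ Finset.range (plen lam)).filter
      (fun p => p.1 < p.2),
    ((degv lam p.2 : ℝ) - (degv lam p.1 : ℝ))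

/-- The Wronskian determinant of `r` polynomials. -/
def wronskian (r : ℕ) (f : ℕ → Polynomial ℝ) : Polynomial ℝ :=
  Matrix.det (Matrix.of fun i j : Fin r =>
    (fun q => Polynomial.derivative q)^[(j : ℕ)] (f (i : ℕ)))

/-- The Wronskian Appell polynomial `A_λ = Wr[A_{n_1},…,A_{n_r}] / Δ(n_λ)`. -/
def wap (A : ℕ → Polynomial ℝ) (lam : Ptn) : Polynomial ℝ :=
  (vand lam)⁻¹ • wronskian (plen lam) (fun i => A (degv lam i))

/-- `(A_n)` is an Appell sequence: `A_0 = 1` and `A_n' = n·A_{n-1}`. -/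
def IsAppell (A : ℕ → Polynomial ℝ) : Prop :=
  A 0 = 1 ∧ ∀ n : ℕ, 1 ≤ n → Polynomial.derivative (A n) = n • A (n - 1)

/-- The set of cells of the skew diagram `λ/μ`. -/
def skewSet (lam mu : Ptn) : Set (ℕ × ℕ) := {p | mu p.1 ≤ p.2 ∧ p.2 < lam p.1}

/-- Two cells are adjacent (share an edge). -/
def Adj (p q : ℕ × ℕ) : Prop :=
  (p.1 = q.1 ∧ (p.2 + 1 = q.2 ∨ q.2 + 1 = p.2)) ∨
  (p.2 = q.2 ∧ (p.1 + 1 = q.1 ∨ q.1 + 1 = p.1))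

/-- A set of cells is (edge-)connected. -/
def ConnectedIn (S : Set (ℕ × ℕ)) : Prop :=
  ∀ a b : S, Relation.ReflTransGen (fun x y : S => Adj x.1 y.1) a b

/-- A set of cells contains no 2×2 square. -/
def No2x2 (S : Set (ℕ × ℕ)) : Prop :=
  ¬ ∃ i j : ℕ, (i, j) ∈ S ∧ (i + 1, j) ∈ S ∧ (i, j + 1) ∈ S ∧ (i + 1, j + 1) ∈ S

/-- `λ/μ` is a rim hook of size `k`. -/
def IsRimHook (lam mu : Ptn) (k : ℕ) : Prop :=
  IsPtn lam ∧ IsPtn mu ∧ (∀ i, mu i ≤ lam i) ∧ psize mu + k = psize lam ∧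
  ConnectedIn (skewSet lam mu) ∧ No2x2 (skewSet lam mu)

/-- The height of the rim hook `λ/μ`: one less than the number of rows. -/
def rhHeight (lam mu : Ptn) : ℕ :=
  Nat.card {i : ℕ | ∃ j, (i, j) ∈ skewSet lam mu} - 1

/-! ### Symmetric functions, `h`-model:
`Λ = ℚ[h_1, h_2, …]` with `X m = h_{m+1}`. -/

abbrev SymF := MvPolynomial ℕ ℚ

/-- The complete homogeneous symmetric function `h_m` (as a free generator). -/
def hsym (m : ℕ) : SymF := if m = 0 then 1 else MvPolynomial.X (m - 1)

/-- `h_k` extended to integer indices by `0` for `k < 0`. -/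
def hz (k : ℤ) : SymF := if k < 0 then 0 else hsym k.toNat

/-- The Schur function `s_λ`, via the Jacobi–Trudi formula
`s_λ = det[h_{λ_i - i + j}]`. -/
def schur (lam : Ptn) : SymF :=
  Matrix.det (Matrix.of fun i j : Fin (plen lam) =>
    hz ((lam (i : ℕ) : ℤ) - (i : ℕ) + (j : ℕ)))

/-! ### Symmetric functions, `p`-model:
`Λ_ℚ = ℚ[p_1, p_2, …]` with `X m = p_{m+1}`. -/

/-- The power sum `p_m` (as a free generator; only used for `m ≥ 1`). -/
def psym (m : ℕ) : SymF := MvPolynomial.X (m - 1)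

/-- The complete homogeneous symmetric functions, expressed in the power
sums via the Newton recursion `n h_n = ∑_{k=1}^n p_k h_{n-k}`. -/
def hh : ℕ → SymF
  | 0 => 1
  | (n + 1) => ((n + 1 : ℚ))⁻¹ • ∑ k ∈ Finset.range (n + 1), psym (k + 1) * hh (n - k)
termination_by n => n
decreasing_by exact Nat.lt_succ_of_le (Nat.sub_le _ _)

/-- `hh` extended to integer indices. -/
def hzP (k : ℤ) : SymF := if k < 0 then 0 else hh k.toNat

/-- The Schur function in the `p`-model, via Jacobi–Trudi. -/
def schurP (lam : Ptn) : SymF :=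
  Matrix.det (Matrix.of fun i j : Fin (plen lam) =>
    hzP ((lam (i : ℕ) : ℤ) - (i : ℕ) + (j : ℕ)))

/-- The elementary symmetric functions in the `p`-model: `e_n = ω(h_n)` where
`ω(p_k) = (-1)^{k-1} p_k`. -/
def ee (n : ℕ) : SymF :=
  MvPolynomial.bind₁ (fun m : ℕ => ((-1 : ℚ) ^ m) • MvPolynomial.X m) (hh n)

/-- The exponential of a power series with coefficients in `Λ_ℚ`
(correct for series with zero constant term). -/
def pexp (S : PowerSeries SymF) : PowerSeries SymF :=
  PowerSeries.mk fun n =>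
    ∑ k ∈ Finset.range (n + 1), (k.factorial : ℚ)⁻¹ • (PowerSeries.coeff n (S ^ k))

/-- The exponential of a real power series (correct for series with zero
constant term). -/
def rexp (S : PowerSeries ℝ) : PowerSeries ℝ :=
  PowerSeries.mk fun n =>
    ∑ k ∈ Finset.range (n + 1), (k.factorial : ℝ)⁻¹ * (PowerSeries.coeff n (S ^ k))

/-- The moment exponential generating function `f_A(t) = ∑ A_k(0) t^k/k!`. -/
def fser (A : ℕ → Polynomial ℝ) : PowerSeries ℝ :=
  PowerSeries.mk fun k => (A k).eval 0 / k.factorial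

/-- The column partition `(1^n)`. -/
def colP (n : ℕ) : Ptn :=
  Finsupp.onFinset (Finset.range n) (fun i => if i < n then 1 else 0)
    (by intro a ha; rw [Finset.mem_range]; by_contra h; simp [h] at ha)

/-- The conjugate partition `λ'`. -/
def conjP (lam : Ptn) : Ptn :=
  Finsupp.onFinset (Finset.range (lam.support.sup fun i => lam i))
    (fun j => conjF lam j)
    (by
      intro a ha
      rw [Finset.mem_range]
      obtain ⟨i, hi⟩ := Finset.card_pos.mp (Nat.pos_of_ne_zero ha)
      rw [Finset.mem_filter] at hi
      exact lt_of_lt_of_le hi.2 (Finset.le_sup hi.1))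

end WAPpr

end

/-!
Young's lattice is a differential poset. Two distinct partitions `μ, ν` of `n` have at most one
common upper cover, `μ ⊔ ν`, and at most one common lower cover, `μ ⊓ ν`; since
`|μ ⊔ ν| + |μ ⊓ ν| = 2n`, one exists exactly when the other does. A single partition has one
more addable than removable corner. Together these say `DU - UD = I` for the up and down operators.
Applied to the chain counts `F` by induction on `n`, this gives `∑_{λ ⋗ μ} F λ = (n + 1) F μ`
for `μ ⊢ n`; expanding one factor of `F λ ^ 2` over the lower covers of `λ` then shows that
`∑_{λ ⊢ n} F λ ^ 2` grows by the factor `n + 1` from level `n` to level `n + 1`.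
-/

open Finset Nat

namespace Finsupp

variable {ι : Type*}

theorem degree_lt_degree {f g : ι →₀ ℕ} (h : f < g) : f.degree < g.degree := by
  obtain ⟨d, rfl⟩ := le_iff_exists_add.1 h.le
  have hd : d ≠ 0 := by rintro rfl; simp at h
  rw [map_add]
  have := mt (degree_eq_zero_iff d).1 hd
  omega

theorem eq_of_le_of_degree_le {f g : ι →₀ ℕ} (h : f ≤ g) (hd : g.degree ≤ f.degree) : f = g :=
  h.eq_of_not_lt fun hlt => (degree_lt_degree hlt).not_ge hd

theorem degree_sup_add_degree_inf (f g : ι →₀ ℕ) :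
    (f ⊔ g).degree + (f ⊓ g).degree = f.degree + g.degree := by
  rw [← map_add, ← map_add]
  congr 1
  ext i
  exact max_add_min (f i) (g i)

end Finsupp

namespace Finset

variable {α : Type*} [DecidableEq α]

theorem card_eq_ite_of_subset_singleton {s : Finset α} {a : α} (h : s ⊆ {a}) :
    #s = if a ∈ s then 1 else 0 := by
  rcases subset_singleton_iff.1 h with rfl | rfl <;> simp

theorem sum_sum_eq_sum_card_inter_smul {β : Type*} [AddCommMonoid β]
    {N M : α → Finset α} (hMN : ∀ b c, c ∈ M b ↔ b ∈ N c) {a : α} {s : Finset α}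
    (hs : ∀ b ∈ N a, M b ⊆ s) (f : α → β) :
    ∑ b ∈ N a, ∑ c ∈ M b, f c = ∑ c ∈ s, #(N a ∩ N c) • f c := by
  simp_rw [← sum_const]
  refine sum_comm' fun b c => ?_
  rw [mem_inter, hMN]
  exact ⟨fun h => ⟨h, hs b h.1 ((hMN _ _).2 h.2)⟩, fun h => h.1⟩

end Finset

section CoverChain

variable {α : Type*} (r : α → α → Prop)

abbrev CoverChain (a : α) (k : ℕ) (b : α) : Type _ :=
  {T : Fin (k + 1) → α // T 0 = a ∧ T (Fin.last k) = b ∧ ∀ i : Fin k, r (T i.succ) (T i.castSucc)}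

variable {r} {a b : α} {k : ℕ}

def CoverChain.snocEquiv {s : Finset α} (hs : ∀ c, r b c ↔ c ∈ s) :
    CoverChain r a (k + 1) b ≃ Σ c : s, CoverChain r a k c where
  toFun T :=
    ⟨⟨T.1 (Fin.last k).castSucc, (hs _).1 (by simpa [T.2.2.1] using T.2.2.2 (Fin.last k))⟩,
      ⟨Fin.init T.1, T.2.1, rfl, fun i => T.2.2.2 i.castSucc⟩⟩
  invFun x := ⟨Fin.snoc x.2.1 b, by
    refine ⟨(Fin.snoc_castSucc (α := fun _ => α) b x.2.1 0).trans x.2.2.1, Fin.snoc_last _ _,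
      fun i => ?_⟩
    induction i using Fin.lastCases with
    | last =>
      rw [Fin.succ_last, Fin.snoc_last, Fin.snoc_castSucc, x.2.2.2.1]
      exact (hs _).2 x.1.2
    | cast i =>
      rw [Fin.succ_castSucc, Fin.snoc_castSucc, Fin.snoc_castSucc]
      exact x.2.2.2.2 i⟩
  left_inv T := Subtype.ext (by conv_rhs => rw [← Fin.snoc_init_self T.1, T.2.2.1])
  right_inv x := Sigma.subtype_ext
    (Subtype.ext ((Fin.snoc_castSucc (α := fun _ => α) b x.2.1 _).trans x.2.2.2.1))
    (Fin.init_snoc (α := fun _ => α) b x.2.1)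

instance : Subsingleton (CoverChain r a 0 b) :=
  ⟨fun T T' => Subtype.ext (funext fun i => by
    rw [Subsingleton.elim (α := Fin 1) i 0, T.2.1, T'.2.1])⟩

theorem CoverChain.card_zero : Nat.card (CoverChain r a 0 a) = 1 :=
  Nat.card_eq_one_iff_unique.2 ⟨inferInstance, ⟨⟨fun _ => a, rfl, rfl, Fin.elim0⟩⟩⟩

theorem CoverChain.finite {down : α → Finset α} (hdown : ∀ b c, r b c ↔ c ∈ down b) :
    ∀ k b, Finite (CoverChain r a k b)
  | 0, _ => inferInstance
  | k + 1, b =>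
    have := CoverChain.finite hdown k
    Finite.of_equiv _ (CoverChain.snocEquiv (hdown b)).symm

theorem CoverChain.card_succ {down : α → Finset α} (hdown : ∀ b c, r b c ↔ c ∈ down b) :
    Nat.card (CoverChain r a (k + 1) b) = ∑ c ∈ down b, Nat.card (CoverChain r a k c) := by
  have := CoverChain.finite (a := a) hdown k
  rw [Nat.card_congr (CoverChain.snocEquiv (hdown b)), Nat.card_sigma]
  exact sum_coe_sort (down b) fun c => Nat.card (CoverChain r a k c)

end CoverChain

/-- A graded poset with finite rank levels, given by its up- and down-covers;
`card_up_inter_up` is Stanley's condition `DU - UD = I` defining a differential poset. -/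
structure DifferentialPoset (α : Type*) [DecidableEq α] where
  level : ℕ → Finset α
  up : α → Finset α
  down : α → Finset α
  mem_up_iff_mem_down {a b : α} : b ∈ up a ↔ a ∈ down b
  up_subset {n : ℕ} {a : α} : a ∈ level n → up a ⊆ level (n + 1)
  down_subset {n : ℕ} {a : α} : a ∈ level (n + 1) → down a ⊆ level n
  down_eq_empty {a : α} : a ∈ level 0 → down a = ∅
  card_up_inter_up {n : ℕ} {a b : α} : a ∈ level n → b ∈ level n →
    #(up a ∩ up b) = #(down a ∩ down b) + if a = b then 1 else 0

namespace DifferentialPoset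

variable {α : Type*} [DecidableEq α] (D : DifferentialPoset α) {e : α → ℕ}

theorem sum_up_eq_sum_down_sum_up_add {n : ℕ} {a : α}
    (he : ∀ n, ∀ a ∈ D.level (n + 1), e a = ∑ b ∈ D.down a, e b) (ha : a ∈ D.level n) :
    ∑ b ∈ D.up a, e b = ∑ d ∈ D.down a, ∑ c ∈ D.up d, e c + e a := by
  have hup_down : ∀ b ∈ D.up a, D.down b ⊆ D.level n :=
    fun b hb => D.down_subset (D.up_subset ha hb)
  have hdown_up : ∀ d ∈ D.down a, D.up d ⊆ D.level n := by
    intro d hd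
    cases n with
    | zero => simp [D.down_eq_empty ha] at hd
    | succ m => exact D.up_subset (D.down_subset ha hd)
  calc ∑ b ∈ D.up a, e b = ∑ b ∈ D.up a, ∑ c ∈ D.down b, e c :=
        sum_congr rfl fun b hb => he n b (D.up_subset ha hb)
    _ = ∑ c ∈ D.level n, #(D.up a ∩ D.up c) • e c :=
        sum_sum_eq_sum_card_inter_smul (fun _ _ => D.mem_up_iff_mem_down.symm) hup_down e
    _ = ∑ c ∈ D.level n, (#(D.down a ∩ D.down c) • e c + if a = c then e c else 0) := by
        refine sum_congr rfl fun c hc => ?_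
        rw [D.card_up_inter_up ha hc, add_smul]
        split_ifs <;> simp
    _ = ∑ d ∈ D.down a, ∑ c ∈ D.up d, e c + e a := by
        rw [sum_add_distrib, sum_ite_eq, if_pos ha,
          sum_sum_eq_sum_card_inter_smul (fun _ _ => D.mem_up_iff_mem_down) hdown_up e]

theorem sum_up_eq_succ_mul (he : ∀ n, ∀ a ∈ D.level (n + 1), e a = ∑ b ∈ D.down a, e b) (n : ℕ) :
    ∀ a ∈ D.level n, ∑ b ∈ D.up a, e b = (n + 1) * e a := by
  induction n with
  | zero => intro a ha; simp [D.sum_up_eq_sum_down_sum_up_add he ha, D.down_eq_empty ha]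
  | succ n ih =>
    intro a ha
    rw [D.sum_up_eq_sum_down_sum_up_add he ha,
      sum_congr rfl fun d hd => ih d (D.down_subset ha hd), ← mul_sum, ← he n a ha]
    ring

theorem sum_level_sq (he : ∀ n, ∀ a ∈ D.level (n + 1), e a = ∑ b ∈ D.down a, e b) (n : ℕ) :
    ∑ a ∈ D.level n, e a ^ 2 = n ! * ∑ a ∈ D.level 0, e a ^ 2 := by
  induction n with
  | zero => simp
  | succ n ih =>
    calc ∑ a ∈ D.level (n + 1), e a ^ 2
      _ = ∑ a ∈ D.level (n + 1), ∑ b ∈ D.down a, e a * e b := by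
          refine sum_congr rfl fun a ha => ?_
          rw [sq, ← mul_sum, ← he n a ha]
      _ = ∑ b ∈ D.level n, ∑ a ∈ D.up b, e a * e b := by
          refine sum_comm' fun a b => ?_
          exact ⟨fun h => ⟨D.mem_up_iff_mem_down.2 h.2, D.down_subset h.1 h.2⟩,
            fun h => ⟨D.up_subset h.2 h.1, D.mem_up_iff_mem_down.1 h.1⟩⟩
      _ = (n + 1) * ∑ b ∈ D.level n, e b ^ 2 := by
          rw [mul_sum]
          refine sum_congr rfl fun b hb => ?_
          rw [← sum_mul, D.sum_up_eq_succ_mul he n b hb]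
          ring
      _ = (n + 1)! * ∑ a ∈ D.level 0, e a ^ 2 := by
          rw [ih, Nat.factorial_succ, mul_assoc]

end DifferentialPoset

namespace WAPpr

variable {f g lam mu nu rho : Ptn} {i n : ℕ}

theorem psize_eq_degree (f : Ptn) : psize f = f.degree := rfl

theorem isPtn_iff_succ_le : IsPtn f ↔ ∀ i, f (i + 1) ≤ f i :=
  ⟨fun h i => h i.le_succ, antitone_nat_of_succ_le⟩

theorem IsPtn.sup (hf : IsPtn f) (hg : IsPtn g) : IsPtn (f ⊔ g) := fun i j h => by
  simpa only [Finsupp.sup_apply] using sup_le_sup (hf h) (hg h)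

theorem IsPtn.inf (hf : IsPtn f) (hg : IsPtn g) : IsPtn (f ⊓ g) := fun i j h => by
  simpa only [Finsupp.inf_apply] using inf_le_inf (hf h) (hg h)

theorem IsPtn.lt_psize (hf : IsPtn f) (hi : i ∈ f.support) : i < psize f := by
  have hrange : range (i + 1) ⊆ f.support := fun j hj => by
    have := hf (Nat.lt_succ_iff.1 (mem_range.1 hj))
    rw [Finsupp.mem_support_iff] at hi ⊢
    omega
  have hcard : #f.support ≤ ∑ j ∈ f.support, f j := by
    simpa using card_nsmul_le_sum f.support f 1 fun j hj =>
      Nat.one_le_iff_ne_zero.2 (Finsupp.mem_support_iff.1 hj)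
  have := card_le_card hrange
  rw [card_range] at this
  exact this.trans hcard

theorem finite_setOf_isPtn_psize_eq (n : ℕ) : {f : Ptn | IsPtn f ∧ psize f = n}.Finite :=
  ((range n).finsuppAntidiag n).finite_toSet.subset fun f ⟨hf, hn⟩ => by
    have hsub : f.support ⊆ range n := fun i hi => mem_range.2 (hn ▸ hf.lt_psize hi)
    exact mem_finsuppAntidiag.2
      ⟨(sum_subset hsub fun i _ hi => Finsupp.notMem_support_iff.1 hi).symm.trans hn, hsub⟩

noncomputable def partitions (n : ℕ) : Finset Ptn := (finite_setOf_isPtn_psize_eq n).toFinset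

theorem mem_partitions : f ∈ partitions n ↔ IsPtn f ∧ psize f = n :=
  Set.Finite.mem_toFinset _

theorem partitions_zero : partitions 0 = {0} := by
  ext f
  rw [mem_partitions, mem_singleton, psize_eq_degree, Finsupp.degree_eq_zero_iff]
  exact ⟨And.right, fun h => ⟨h ▸ fun _ _ _ => le_rfl, h⟩⟩

theorem covers_iff_exists_eq_add_single :
    Covers lam mu ↔ IsPtn lam ∧ IsPtn mu ∧ ∃ i, lam = mu + Finsupp.single i 1 := by
  refine ⟨fun ⟨hlam, hmu, hle, hsize⟩ => ⟨hlam, hmu, ?_⟩, fun ⟨hlam, hmu, i, hi⟩ => ?_⟩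
  · obtain ⟨d, rfl⟩ := le_iff_exists_add.1 (Finsupp.le_def.2 hle)
    have hd : psize d = 1 := by
      simp only [psize_eq_degree, map_add] at hsize ⊢
      omega
    obtain ⟨i, rfl⟩ := (Finsupp.sum_eq_one_iff d).1 hd
    exact ⟨i, rfl⟩
  · subst hi
    refine ⟨hlam, hmu, fun j => by simp, ?_⟩
    simp [psize_eq_degree]

def removableRows (f : Ptn) : Finset ℕ := f.support.filter fun i => f (i + 1) < f i

-- A cell can be added to row `0`, or to row `i + 1` exactly when one can be removed from row `i`.
def addableRows (f : Ptn) : Finset ℕ := insert 0 ((removableRows f).map (addRightEmbedding 1))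

theorem mem_removableRows : i ∈ removableRows f ↔ f (i + 1) < f i := by
  simp only [removableRows, mem_filter, Finsupp.mem_support_iff]
  omega

theorem mem_addableRows : i ∈ addableRows f ↔ i = 0 ∨ f i < f (i - 1) := by
  cases i <;> simp [addableRows, mem_removableRows]

theorem card_addableRows (f : Ptn) : #(addableRows f) = #(removableRows f) + 1 := by
  rw [addableRows, card_insert_of_notMem (by simp), card_map]

theorem isPtn_add_single_iff (hf : IsPtn f) :
    IsPtn (f + Finsupp.single i 1) ↔ i ∈ addableRows f := by
  rw [mem_addableRows, isPtn_iff_succ_le]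
  rw [isPtn_iff_succ_le] at hf
  refine ⟨fun h => ?_, fun h j => ?_⟩
  · cases i with
    | zero => exact Or.inl rfl
    | succ i => simpa [Finsupp.single_apply] using h i
  · have := hf j
    simp only [Finsupp.add_apply, Finsupp.single_apply]
    split_ifs <;> grind

theorem isPtn_iff_mem_removableRows (h : IsPtn (f + Finsupp.single i 1)) :
    IsPtn f ↔ i ∈ removableRows (f + Finsupp.single i 1) := by
  rw [mem_removableRows, isPtn_iff_succ_le]
  rw [isPtn_iff_succ_le] at h
  refine ⟨fun hf => ?_, fun hi j => ?_⟩
  · simpa [Finsupp.single_apply] using Nat.lt_succ_of_le (hf i)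
  · have := h j
    simp only [Finsupp.add_apply, Finsupp.single_apply] at this hi
    split_ifs at this hi <;> grind

open scoped Classical in
noncomputable def upperCovers (mu : Ptn) : Finset Ptn :=
  (partitions (psize mu + 1)).filter (Covers · mu)

open scoped Classical in
noncomputable def lowerCovers (mu : Ptn) : Finset Ptn := (Iic mu).filter (Covers mu)

theorem mem_upperCovers : lam ∈ upperCovers mu ↔ Covers lam mu := by
  simp only [upperCovers, mem_filter, mem_partitions]
  exact ⟨And.right, fun h => ⟨⟨h.1, h.2.2.2.symm⟩, h⟩⟩

theorem mem_lowerCovers : rho ∈ lowerCovers mu ↔ Covers mu rho := by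
  simp only [lowerCovers, mem_filter, mem_Iic]
  exact ⟨And.right, fun h => ⟨Finsupp.le_def.2 h.2.2.1, h⟩⟩

theorem card_upperCovers (hmu : IsPtn mu) : #(upperCovers mu) = #(addableRows mu) := by
  refine (card_bij (fun i _ => mu + Finsupp.single i 1) (fun i hi => ?_) (fun i _ j _ h => ?_)
    fun lam hlam => ?_).symm
  · exact mem_upperCovers.2 (covers_iff_exists_eq_add_single.2
      ⟨(isPtn_add_single_iff hmu).2 hi, hmu, i, rfl⟩)
  · exact Finsupp.single_left_injective one_ne_zero (add_left_cancel h)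
  · obtain ⟨hlam, -, i, rfl⟩ := covers_iff_exists_eq_add_single.1 (mem_upperCovers.1 hlam)
    exact ⟨i, (isPtn_add_single_iff hmu).1 hlam, rfl⟩

theorem card_lowerCovers (hmu : IsPtn mu) : #(lowerCovers mu) = #(removableRows mu) := by
  refine (card_bij (fun i _ => mu - Finsupp.single i 1) (fun i hi => ?_) (fun i hi j _ h => ?_)
    fun rho hrho => ?_).symm
  · have hi' := mem_removableRows.1 hi
    obtain ⟨rho, rfl⟩ : ∃ rho, mu = rho + Finsupp.single i 1 :=
      ⟨_, (tsub_add_cancel_of_le (Finsupp.single_le_iff.2 (by omega))).symm⟩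
    rw [add_tsub_cancel_right]
    exact mem_lowerCovers.2 (covers_iff_exists_eq_add_single.2
      ⟨hmu, (isPtn_iff_mem_removableRows hmu).2 hi, i, rfl⟩)
  · have hi' := mem_removableRows.1 hi
    have := DFunLike.congr_fun h i
    simp only [Finsupp.tsub_apply, Finsupp.single_apply] at this
    split_ifs at this <;> omega
  · obtain ⟨-, hrho', i, rfl⟩ := covers_iff_exists_eq_add_single.1 (mem_lowerCovers.1 hrho)
    exact ⟨i, (isPtn_iff_mem_removableRows hmu).1 hrho', add_tsub_cancel_right _ _⟩

theorem psize_lt_psize_sup (hne : mu ≠ nu) (h : psize mu = psize nu) :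
    psize mu < psize (mu ⊔ nu) := by
  refine Finsupp.degree_lt_degree (lt_of_le_of_ne le_sup_left fun heq => hne ?_)
  exact (Finsupp.eq_of_le_of_degree_le (sup_eq_left.1 heq.symm) h.le).symm

theorem upperCovers_inter_subset (hne : mu ≠ nu) (h : psize mu = psize nu) :
    upperCovers mu ∩ upperCovers nu ⊆ {mu ⊔ nu} := fun lam hlam => by
  simp only [mem_inter, mem_upperCovers] at hlam
  obtain ⟨⟨-, -, hmu, hsize⟩, ⟨-, -, hnu, -⟩⟩ := hlam
  have hle : mu ⊔ nu ≤ lam := sup_le (Finsupp.le_def.2 hmu) (Finsupp.le_def.2 hnu)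
  have := psize_lt_psize_sup hne h
  refine mem_singleton.2 (Finsupp.eq_of_le_of_degree_le hle ?_).symm
  simp only [← psize_eq_degree]
  omega

theorem lowerCovers_inter_subset (hne : mu ≠ nu) (h : psize mu = psize nu) :
    lowerCovers mu ∩ lowerCovers nu ⊆ {mu ⊓ nu} := fun rho hrho => by
  simp only [mem_inter, mem_lowerCovers] at hrho
  obtain ⟨⟨-, -, hmu, hsize⟩, ⟨-, -, hnu, -⟩⟩ := hrho
  have hle : rho ≤ mu ⊓ nu := le_inf (Finsupp.le_def.2 hmu) (Finsupp.le_def.2 hnu)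
  have := psize_lt_psize_sup hne h
  have := Finsupp.degree_sup_add_degree_inf mu nu
  simp only [← psize_eq_degree] at this
  refine mem_singleton.2 (Finsupp.eq_of_le_of_degree_le hle ?_)
  simp only [← psize_eq_degree]
  omega

theorem card_upperCovers_inter_eq_card_lowerCovers_inter (hmu : IsPtn mu) (hnu : IsPtn nu)
    (hne : mu ≠ nu) (h : psize mu = psize nu) :
    #(upperCovers mu ∩ upperCovers nu) = #(lowerCovers mu ∩ lowerCovers nu) := by
  rw [card_eq_ite_of_subset_singleton (upperCovers_inter_subset hne h),
    card_eq_ite_of_subset_singleton (lowerCovers_inter_subset hne h)]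
  have hmod := Finsupp.degree_sup_add_degree_inf mu nu
  simp only [← psize_eq_degree] at hmod
  refine if_congr ?_ rfl rfl
  simp only [mem_inter, mem_upperCovers, mem_lowerCovers, Covers, hmu, hnu, hmu.sup hnu,
    hmu.inf hnu, true_and]
  simp only [← Finsupp.le_def, le_sup_left, le_sup_right, inf_le_left, inf_le_right, true_and]
  omega

noncomputable def youngLattice : DifferentialPoset Ptn where
  level := partitions
  up := upperCovers
  down := lowerCovers
  mem_up_iff_mem_down := mem_upperCovers.trans mem_lowerCovers.symm
  up_subset ha lam hlam := by
    obtain ⟨hlam, -, -, hsize⟩ := mem_upperCovers.1 hlam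
    exact mem_partitions.2 ⟨hlam, (mem_partitions.1 ha).2 ▸ hsize.symm⟩
  down_subset ha rho hrho := by
    obtain ⟨-, hrho, -, hsize⟩ := mem_lowerCovers.1 hrho
    have := (mem_partitions.1 ha).2
    exact mem_partitions.2 ⟨hrho, by omega⟩
  down_eq_empty ha := eq_empty_of_forall_notMem fun rho hrho => by
    have := (mem_lowerCovers.1 hrho).2.2.2
    have := (mem_partitions.1 ha).2
    omega
  card_up_inter_up {_ mu nu} hmu hnu := by
    obtain ⟨hmu, hsize⟩ := mem_partitions.1 hmu
    obtain ⟨hnu, hsize'⟩ := mem_partitions.1 hnu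
    by_cases hne : mu = nu
    · subst hne
      simp only [inter_self, if_true, card_upperCovers hmu, card_lowerCovers hmu,
        card_addableRows]
    · rw [if_neg hne, add_zero]
      exact card_upperCovers_inter_eq_card_lowerCovers_inter hmu hnu hne
        (hsize.trans hsize'.symm)

theorem F_eq_card_coverChain (h : psize lam = n) :
    F lam = Nat.card (CoverChain Covers 0 n lam) := by
  subst h; rfl

theorem F_zero : F 0 = 1 := CoverChain.card_zero

theorem F_eq_sum_lowerCovers (h : psize lam = n + 1) :
    F lam = ∑ mu ∈ lowerCovers lam, F mu := by
  rw [F_eq_card_coverChain h,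
    CoverChain.card_succ (r := Covers) fun _ _ => mem_lowerCovers.symm]
  refine sum_congr rfl fun mu hmu => (F_eq_card_coverChain ?_).symm
  have := (mem_lowerCovers.1 hmu).2.2.2
  omega

end WAPpr

open WAPpr in
/-- `n! = ∑_{λ ⊢ n} F_λ²`. -/
theorem sum_F_sq (n : ℕ) :
    n.factorial = ∑ᶠ (lam : Ptn) (_ : IsPtn lam ∧ psize lam = n), (F lam) ^ 2 := by
  have h := youngLattice.sum_level_sq (e := F)
    (fun _ _ hlam => F_eq_sum_lowerCovers (mem_partitions.1 hlam).2) n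
  rw [show youngLattice.level 0 = {0} from partitions_zero, sum_singleton, F_zero, one_pow,
    mul_one] at h
  exact h.symm.trans (finsum_mem_eq_finite_toFinset_sum _ (finite_setOf_isPtn_psize_eq n)).symm
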